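/- arXiv:2409.01303 — 2 statements merged into one kernel-verified Lean document; each statement's English description precedes it below -/
import Mathlib

section
/- Set ε := √3·sin(π/8) and define Φ_sph : ℝ² → ℝ³ by Φ_sph(θ, φ) = (sin φ cos θ, sin φ sin θ, cos φ). Let S be a subset of the unit sphere S² ⊂ ℝ³ whose Euclidean diameter is strictly less than ε. Then there exists θ₀ ∈ ℝ such that S is disjoint from the band {Φ_sph(θ, φ) : θ₀ ≤ θ ≤ θ₀ + 2π/3, π/8 ≤ φ ≤ 7π/8}. -/
/-!
If `S` met every band, pick `p₁ = Φ_sph(θ₁, φ₁) ∈ S` in the band starting at `θ = 0` and then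
`p₂ = Φ_sph(θ₂, φ₂) ∈ S` in the band starting at `θ₁ + 2π/3`. Then `θ₂ - θ₁ ∈ [2π/3, 4π/3]`, so
`cos (θ₂ - θ₁) ≤ -1/2`, while `sin φᵢ ≥ sin (π/8)`. Expanding the squared distance gives
`‖p₁ - p₂‖² ≥ sin² φ₁ + sin φ₁ sin φ₂ + sin² φ₂ ≥ 3 sin² (π/8)`, contradicting `diam S < ε`.
-/

open Real

/-- The spherical coordinate map `Φ_sph(θ, φ) = (sin φ cos θ, sin φ sin θ, cos φ)`. -/
noncomputable def sphCoord (θ φ : ℝ) : EuclideanSpace ℝ (Fin 3) :=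
  WithLp.toLp 2 ![Real.sin φ * Real.cos θ, Real.sin φ * Real.sin θ, Real.cos φ]

lemma sin_le_sin_of_le_of_le_pi_sub {a x : ℝ} (ha : 0 ≤ a) (hax : a ≤ x) (hxa : x ≤ π - a) :
    sin a ≤ sin x := by
  rcases le_total x (π / 2) with hx | hx
  · exact sin_le_sin_of_le_of_le_pi_div_two (by linarith [pi_pos]) hx hax
  · rw [← sin_pi_sub x]
    exact sin_le_sin_of_le_of_le_pi_div_two (by linarith [pi_pos]) (by linarith) (by linarith)

lemma cos_le_neg_half_of_mem_Icc {x : ℝ} (h₁ : 2 * π / 3 ≤ x) (h₂ : x ≤ 4 * π / 3) :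
    cos x ≤ -(1 / 2) := by
  have h : cos (π / 3) ≤ cos |x - π| :=
    cos_le_cos_of_nonneg_of_le_pi (abs_nonneg _) (by linarith [pi_pos])
      (abs_le.2 ⟨by linarith, by linarith⟩)
  rw [cos_pi_div_three, cos_abs, cos_sub_pi] at h
  linarith

lemma dist_sphCoord_sq (θ₁ φ₁ θ₂ φ₂ : ℝ) :
    dist (sphCoord θ₁ φ₁) (sphCoord θ₂ φ₂) ^ 2 =
      2 - 2 * sin φ₁ * sin φ₂ * cos (θ₂ - θ₁) - 2 * cos φ₁ * cos φ₂ := by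
  rw [EuclideanSpace.dist_eq, sq_sqrt (by positivity), Fin.sum_univ_three]
  simp only [sphCoord, PiLp.toLp_apply, Matrix.cons_val_zero, Matrix.cons_val_one,
    Matrix.cons_val_two, Matrix.head_cons, Matrix.tail_cons, Real.dist_eq, sq_abs, cos_sub]
  linear_combination sin φ₁ ^ 2 * sin_sq_add_cos_sq θ₁ + sin φ₂ ^ 2 * sin_sq_add_cos_sq θ₂ +
    sin_sq_add_cos_sq φ₁ + sin_sq_add_cos_sq φ₂

lemma sqrt_three_mul_le_dist_sphCoord {s θ₁ φ₁ θ₂ φ₂ : ℝ} (hs : 0 ≤ s)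
    (hs₁ : s ≤ sin φ₁) (hs₂ : s ≤ sin φ₂) (hθ : cos (θ₂ - θ₁) ≤ -(1 / 2)) :
    √3 * s ≤ dist (sphCoord θ₁ φ₁) (sphCoord θ₂ φ₂) := by
  have key : 3 * s ^ 2 ≤ dist (sphCoord θ₁ φ₁) (sphCoord θ₂ φ₂) ^ 2 := by
    have hsin : 0 ≤ sin φ₁ * sin φ₂ := mul_nonneg (hs.trans hs₁) (hs.trans hs₂)
    rw [dist_sphCoord_sq]
    nlinarith [sin_sq_add_cos_sq φ₁, sin_sq_add_cos_sq φ₂, sq_nonneg (cos φ₁ - cos φ₂),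
      mul_le_mul hs₁ hs₂ hs (hs.trans hs₁)]
  rw [← sqrt_sq hs, ← sqrt_mul zero_le_three, ← sqrt_sq dist_nonneg]
  exact sqrt_le_sqrt key

/-- Any subset of the unit sphere of Euclidean diameter `< √3 sin(π/8)` avoids some
"timezone" band `{Φ_sph(θ, φ) : θ₀ ≤ θ ≤ θ₀ + 2π/3, π/8 ≤ φ ≤ 7π/8}`. -/
theorem exists_band_disjoint (S : Set (EuclideanSpace ℝ (Fin 3)))
    (hS : S ⊆ Metric.sphere (0 : EuclideanSpace ℝ (Fin 3)) 1)
    (hdiam : Metric.diam S < Real.sqrt 3 * Real.sin (π / 8)) :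
    ∃ θ₀ : ℝ, ∀ θ φ : ℝ, θ₀ ≤ θ → θ ≤ θ₀ + 2 * π / 3 →
      π / 8 ≤ φ → φ ≤ 7 * π / 8 → sphCoord θ φ ∉ S := by
  by_contra! h
  obtain ⟨θ₁, φ₁, -, -, hφ₁, hφ₁', hp₁⟩ := h 0
  obtain ⟨θ₂, φ₂, h₂₀, h₂₁, hφ₂, hφ₂', hp₂⟩ := h (θ₁ + 2 * π / 3)
  have hsin {φ : ℝ} (h : π / 8 ≤ φ) (h' : φ ≤ 7 * π / 8) : sin (π / 8) ≤ sin φ :=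
    sin_le_sin_of_le_of_le_pi_sub (by positivity) h (by linarith)
  have hfar := sqrt_three_mul_le_dist_sphCoord
    (sin_nonneg_of_nonneg_of_le_pi (by positivity) (by linarith [pi_pos]))
    (hsin hφ₁ hφ₁') (hsin hφ₂ hφ₂')
    (cos_le_neg_half_of_mem_Icc (x := θ₂ - θ₁) (by linarith) (by linarith))
  have hnear := Metric.dist_le_diam_of_mem (Metric.isBounded_sphere.subset hS) hp₁ hp₂
  linarith
end

section
/- Fix an integer n ≥ 3 and let V_n ⊂ S² be the finite set consisting of the north pole (0,0,1), the south pole (0,0,−1), and the points Φ_sph(2πi/n, (j+1)π/(n+1)) for i = 0, …, n−1 and j = 0, …, n−1. Then for every x ∈ S² there exists v ∈ V_n with Euclidean distance ‖x − v‖ ≤ 2π/n. -/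
/-!
In spherical coordinates the chord length is
`‖Φ(θ, φ) - Φ(θ', φ')‖² = 4 sin²((φ - φ')/2) + 4 sin φ sin φ' sin²((θ - θ')/2)`,
which is at most `(φ - φ')² + (θ - θ')²`. Write `x = Φ(θ, φ)` with `φ ∈ [0, π]`, round `φ` to the
nearest multiple `kπ/(n+1)`, `0 ≤ k ≤ n + 1`, and `θ` to the nearest multiple of `2π/n`. Since
`Φ(θ, 0)` and `Φ(θ, π)` are the poles for every `θ`, this always lands on a vertex, at distance at
most `π/(2(n+1)) + π/n ≤ 2π/n`.
-/

open Real

/-- The vertex set `V_n` of the triangulation `T(n)` of the unit sphere: the two poles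
together with the grid points `Φ_sph(2πi/n, (j+1)π/(n+1))`, `0 ≤ i, j ≤ n−1`. -/
noncomputable def vertexSet (n : ℕ) : Set (EuclideanSpace ℝ (Fin 3)) :=
  {(WithLp.toLp 2 ![0, 0, 1] : EuclideanSpace ℝ (Fin 3)), (WithLp.toLp 2 ![0, 0, -1] : EuclideanSpace ℝ (Fin 3))} ∪
    {p | ∃ i < n, ∃ j < n, p = sphCoord (2 * π * i / n) ((j + 1) * π / (n + 1))}

theorem exists_int_abs_sub_mul_le_half (t : ℝ) {h : ℝ} (hh : 0 < h) :
    ∃ k : ℤ, |t - k * h| ≤ h / 2 := by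
  refine ⟨round (t / h), ?_⟩
  calc |t - round (t / h) * h| = |(t / h - round (t / h)) * h| := by
        rw [sub_mul, div_mul_cancel₀ _ hh.ne']
    _ = |t / h - round (t / h)| * h := by rw [abs_mul, abs_of_pos hh]
    _ ≤ 1 / 2 * h := by gcongr; exact abs_sub_round _
    _ = h / 2 := by ring

theorem exists_nat_le_abs_sub_mul_le_half {t h : ℝ} (hh : 0 < h) {N : ℕ} (ht₀ : 0 ≤ t)
    (htN : t ≤ N * h) : ∃ k ≤ N, |t - k * h| ≤ h / 2 := by
  obtain ⟨k, hk⟩ := exists_int_abs_sub_mul_le_half t hh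
  obtain ⟨hk₁, hk₂⟩ := abs_le.mp hk
  have hk₀ : (-1 : ℤ) < k := by exact_mod_cast (by nlinarith : (-1 : ℝ) < k)
  have hkN : k < N + 1 := by exact_mod_cast (by nlinarith : (k : ℝ) < N + 1)
  lift k to ℕ using by omega
  exact ⟨k, by omega, by exact_mod_cast hk⟩

theorem sphCoord_add_int_mul_two_pi (θ φ : ℝ) (m : ℤ) :
    sphCoord (θ + m * (2 * π)) φ = sphCoord θ φ := by
  simp only [sphCoord, cos_add_int_mul_two_pi, sin_add_int_mul_two_pi]

theorem exists_nat_lt_sphCoord_eq {n : ℕ} (hn : 0 < n) (m : ℤ) (φ : ℝ) :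
    ∃ i < n, sphCoord (2 * π * i / n) φ = sphCoord (m * (2 * π / n)) φ := by
  have hn' : (0 : ℤ) < n := by omega
  have h₀ := Int.emod_nonneg m hn'.ne'
  have h₁ := Int.emod_lt_of_pos m hn'
  have h₂ := Int.emod_add_mul_ediv m n
  refine ⟨(m % n).toNat, by omega, ?_⟩
  have hm : (m : ℝ) = (m % n).toNat + n * (m / n : ℤ) := by
    exact_mod_cast (by omega : m = (m % n).toNat + n * (m / n))
  rw [hm, ← sphCoord_add_int_mul_two_pi _ _ (m / n)]
  congr 1
  field_simp

theorem sphCoord_zero_right (θ : ℝ) : sphCoord θ 0 = WithLp.toLp 2 ![0, 0, 1] := by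
  simp [sphCoord]

theorem sphCoord_pi_right (θ : ℝ) : sphCoord θ π = WithLp.toLp 2 ![0, 0, -1] := by
  simp [sphCoord]

theorem sphCoord_mem_vertexSet {n i k : ℕ} (hi : i < n) (hk : k ≤ n + 1) :
    sphCoord (2 * π * i / n) (k * (π / (n + 1))) ∈ vertexSet n := by
  rcases Nat.eq_zero_or_pos k with rfl | hk₀
  · simp [vertexSet, sphCoord_zero_right]
  rcases hk.eq_or_lt with rfl | hkn
  · left
    have : ((n + 1 : ℕ) : ℝ) * (π / (n + 1)) = π := by push_cast; field_simp
    rw [this, sphCoord_pi_right]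
    simp
  · right
    obtain ⟨j, rfl⟩ := Nat.exists_eq_add_of_lt hk₀
    refine ⟨i, hi, j, by omega, ?_⟩
    push_cast
    ring_nf

theorem cos_eq_one_sub_two_mul_sin_sq_half (x : ℝ) : cos x = 1 - 2 * sin (x / 2) ^ 2 := by
  rw [← cos_two_mul_eq_one_sub, mul_div_cancel₀ _ two_ne_zero]

theorem dist_sphCoord_sq_s11 (θ φ θ' φ' : ℝ) :
    dist (sphCoord θ φ) (sphCoord θ' φ') ^ 2 =
      4 * sin ((φ - φ') / 2) ^ 2 + 4 * sin φ * sin φ' * sin ((θ - θ') / 2) ^ 2 := by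
  rw [EuclideanSpace.dist_eq, sq_sqrt (by positivity), Fin.sum_univ_three]
  simp only [sphCoord, Real.dist_eq, sq_abs, WithLp.ofLp_toLp, Matrix.cons_val_zero,
    Matrix.cons_val_one, Matrix.cons_val_two, Matrix.head_cons, Matrix.tail_cons]
  have hφ := cos_eq_one_sub_two_mul_sin_sq_half (φ - φ')
  have hθ := cos_eq_one_sub_two_mul_sin_sq_half (θ - θ')
  rw [cos_sub] at hφ hθ
  linear_combination sin φ ^ 2 * sin_sq_add_cos_sq θ + sin φ' ^ 2 * sin_sq_add_cos_sq θ'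
    + sin_sq_add_cos_sq φ + sin_sq_add_cos_sq φ' - 2 * hφ - 2 * sin φ * sin φ' * hθ

theorem dist_sphCoord_le (θ φ θ' φ' : ℝ) :
    dist (sphCoord θ φ) (sphCoord θ' φ') ≤ |φ - φ'| + |θ - θ'| := by
  refine le_of_sq_le_sq ?_ (by positivity)
  have hsin : sin φ * sin φ' ≤ 1 := (le_abs_self _).trans <| by
    rw [abs_mul]; exact mul_le_one₀ (abs_sin_le_one φ) (abs_nonneg _) (abs_sin_le_one φ')
  calc dist (sphCoord θ φ) (sphCoord θ' φ') ^ 2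
      ≤ 4 * sin ((φ - φ') / 2) ^ 2 + 4 * sin ((θ - θ') / 2) ^ 2 := by
        rw [dist_sphCoord_sq_s11]
        nlinarith [sq_nonneg (sin ((θ - θ') / 2))]
    _ ≤ 4 * ((φ - φ') / 2) ^ 2 + 4 * ((θ - θ') / 2) ^ 2 := by
        gcongr 4 * ?_ + 4 * ?_ <;> exact sin_sq_le_sq
    _ = |φ - φ'| ^ 2 + |θ - θ'| ^ 2 := by rw [sq_abs, sq_abs]; ring
    _ ≤ (|φ - φ'| + |θ - θ'|) ^ 2 := by
        nlinarith [mul_nonneg (abs_nonneg (φ - φ')) (abs_nonneg (θ - θ'))]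

theorem exists_sphCoord_eq_of_norm_eq_one {x : EuclideanSpace ℝ (Fin 3)} (hx : ‖x‖ = 1) :
    ∃ θ φ, φ ∈ Set.Icc 0 π ∧ sphCoord θ φ = x := by
  have hsum : x 0 ^ 2 + x 1 ^ 2 + x 2 ^ 2 = 1 := by
    rw [EuclideanSpace.norm_eq, sqrt_eq_one, Fin.sum_univ_three] at hx
    simpa only [Real.norm_eq_abs, sq_abs] using hx
  set z : ℂ := ⟨x 0, x 1⟩
  have hsin : sin (arccos (x 2)) = ‖z‖ := by
    rw [sin_arccos, Complex.norm_def, Complex.normSq_apply]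
    congr 1
    simp only [z]
    linear_combination -hsum
  refine ⟨Complex.arg z, arccos (x 2), ⟨arccos_nonneg _, arccos_le_pi _⟩, ?_⟩
  ext i
  fin_cases i
  · simp [sphCoord, hsin, Complex.norm_mul_cos_arg, z]
  · simp [sphCoord, hsin, Complex.norm_mul_sin_arg, z]
  · have h₂ : x 2 ^ 2 ≤ 1 := by nlinarith [sq_nonneg (x 0), sq_nonneg (x 1)]
    obtain ⟨h₂₁, h₂₂⟩ := abs_le.mp ((sq_le_one_iff_abs_le_one _).mp h₂)
    simp [sphCoord, cos_arccos h₂₁ h₂₂]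

/-- Every point of the unit sphere lies within Euclidean distance `2π/n` of some vertex of
the triangulation `T(n)`. -/
theorem exists_vertex_close (n : ℕ) (hn : 3 ≤ n)
    (x : EuclideanSpace ℝ (Fin 3)) (hx : x ∈ Metric.sphere (0 : EuclideanSpace ℝ (Fin 3)) 1) :
    ∃ v ∈ vertexSet n, dist x v ≤ 2 * π / n := by
  obtain ⟨θ, φ, ⟨hφ₀, hφπ⟩, rfl⟩ := exists_sphCoord_eq_of_norm_eq_one (mem_sphere_zero_iff_norm.mp hx)
  obtain ⟨k, hk, hφk⟩ := exists_nat_le_abs_sub_mul_le_half (t := φ) (N := n + 1)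
    (by positivity : 0 < π / (n + 1)) hφ₀ (by push_cast; field_simp; exact hφπ)
  obtain ⟨m, hθm⟩ := exists_int_abs_sub_mul_le_half θ (by positivity : 0 < 2 * π / n)
  obtain ⟨i, hi, hvm⟩ := exists_nat_lt_sphCoord_eq (by omega : 0 < n) m (k * (π / (n + 1)))
  refine ⟨_, sphCoord_mem_vertexSet hi hk, ?_⟩
  calc dist (sphCoord θ φ) (sphCoord (2 * π * i / n) (k * (π / (n + 1))))
      ≤ |φ - k * (π / (n + 1))| + |θ - m * (2 * π / n)| := hvm ▸ dist_sphCoord_le ..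
    _ ≤ π / (n + 1) / 2 + 2 * π / n / 2 := add_le_add hφk hθm
    _ ≤ 2 * π / n := by
      have h₀ : 0 ≤ π / (n + 1) := by positivity
      have h₁ : π / (n + 1) ≤ π / n := by gcongr; linarith
      rw [mul_div_assoc]
      linarith
end
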